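/- Under the identification of HO(n,n) with Λ(n,n)/ℂ·1 (with reversed parity and the Buttin bracket), the subalgebra SHO'(n,n) of divergence-free vector fields is exactly {f ∈ Λ(n,n)/ℂ·1 : Δ(f) = 0}, where Δ = Σ_{i=1}^n ∂²/∂x_i∂ξ_i is the odd Laplace operator. -/
import Mathlib


noncomputable def ssgn (a b : ZMod 2) : ℂ := (-1 : ℂ) ^ (a.val * b.val)

noncomputable def psgn (a : ZMod 2) : ℂ := (-1 : ℂ) ^ a.val

/-- The supercommutative superalgebra `Λ(n,n) = ℂ[x₁,...,xₙ] ⊗ Λ(ξ₁,...,ξₙ)`,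
modelled abstractly: a `ℤ/2`-graded supercommutative `ℂ`-algebra `A` with `n` even
partial derivatives `dx i = ∂/∂xᵢ` and `n` odd partial derivatives `dxi i = ∂/∂ξᵢ`. -/
structure ButtinData (A : Type) [Ring A] [Algebra ℂ A] (n : ℕ) where
  par : ZMod 2 → Submodule ℂ A
  dx : Fin n → A →ₗ[ℂ] A
  dxi : Fin n → A →ₗ[ℂ] A
  supercomm : ∀ (a b : ZMod 2), ∀ f ∈ par a, ∀ g ∈ par b, f * g = ssgn a b • (g * f)
  dx_par : ∀ (i : Fin n) (a : ZMod 2), ∀ f ∈ par a, dx i f ∈ par a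
  dxi_par : ∀ (i : Fin n) (a : ZMod 2), ∀ f ∈ par a, dxi i f ∈ par (a + 1)
  dx_leibniz : ∀ (i : Fin n) (f g : A), dx i (f * g) = dx i f * g + f * dx i g
  dxi_leibniz : ∀ (i : Fin n) (a : ZMod 2), ∀ f ∈ par a, ∀ g : A,
    dxi i (f * g) = dxi i f * g + psgn a • (f * dxi i g)
  dx_dx_comm : ∀ (i j : Fin n) (f : A), dx i (dx j f) = dx j (dx i f)
  dx_dxi_comm : ∀ (i j : Fin n) (f : A), dx i (dxi j f) = dxi j (dx i f)
  dxi_dxi_anticomm : ∀ (i j : Fin n) (f : A), dxi i (dxi j f) = - dxi j (dxi i f)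

/-- The Buttin bracket `[f,g] = Σᵢ (∂f/∂xᵢ ∂g/∂ξᵢ + (-1)^{p_Λ(f)} ∂f/∂ξᵢ ∂g/∂xᵢ)`,
where `a` is the `Λ`-parity of the (homogeneous) first argument `f`. -/
noncomputable def buttin {A : Type} [Ring A] [Algebra ℂ A] {n : ℕ}
    (B : ButtinData A n) (a : ZMod 2) (f g : A) : A :=
  ∑ i : Fin n, (B.dx i f * B.dxi i g + psgn a • (B.dxi i f * B.dx i g))

/-- Under the identification `HO(n,n) ≅ Λ(n,n)/ℂ·1`, `f ↦ Σᵢ (∂f/∂xᵢ ∂/∂ξᵢ +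
(-1)^{p(f)} ∂f/∂ξᵢ ∂/∂xᵢ)`, the vector field associated to a homogeneous `f` of
`Λ`-parity `a` has `∂/∂xᵢ`-coefficient `(-1)^{p(f)} ∂f/∂ξᵢ` and `∂/∂ξᵢ`-coefficient
`∂f/∂xᵢ`; its divergence vanishes if and only if `Δf = 0`, where
`Δ = Σᵢ ∂²/∂xᵢ∂ξᵢ` is the odd Laplace operator.  Hence `SHO'(n,n)` is exactly
`{f ∈ Λ(n,n)/ℂ·1 : Δ(f) = 0}`. -/
theorem SHO'_eq_kernel_of_odd_laplacian
    {A : Type} [Ring A] [Algebra ℂ A] {n : ℕ} (B : ButtinData A n)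
    (a : ZMod 2) (f : A) (hf : f ∈ B.par a) :
    -- div of the vector field associated to f vanishes ↔ Δ f = 0 :
    ((∑ i : Fin n, B.dx i (psgn a • B.dxi i f))
        + ∑ i : Fin n, psgn a • B.dxi i (B.dx i f) = 0)
      ↔ (∑ i : Fin n, B.dx i (B.dxi i f)) = 0 := by
  have h1 : ∀ i : Fin n, B.dx i (psgn a • B.dxi i f) = psgn a • B.dx i (B.dxi i f) :=
    fun i => (B.dx i).map_smul _ _
  have h2 : ∀ i : Fin n, B.dxi i (B.dx i f) = B.dx i (B.dxi i f) :=
    fun i => (B.dx_dxi_comm i i f).symm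
  simp only [h1, h2, ← Finset.smul_sum, ← add_smul]
  rw [smul_eq_zero]
  have : (psgn a : ℂ) ≠ 0 := by
    unfold psgn; exact pow_ne_zero _ (by norm_num)
  constructor
  · rintro (h | h)
    · exact absurd h (by simpa using this)
    · exact h
  · intro h; exact Or.inr h
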